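/- Let n ≥ 1 and σ ∈ (0,1) with n > 2σ. The function w(x,y) = (|x|² + y²)^{−(n−2σ)/2}, defined for (x,y) ∈ ℝ^n × (0,∞), satisfies the degenerate elliptic equation div(y^{1−2σ} ∇_{x,y} w) = 0 at every point of ℝ^n × (0,∞); equivalently, Δ_x w + ∂²_y w + ((1−2σ)/y) ∂_y w = 0 on ℝ^n × (0,∞). -/

import Mathlib

open MeasureTheory Real

/-- The Laplacian on `ℝ^n`: sum of second partial derivatives. -/
noncomputable def lap {n : ℕ} (f : EuclideanSpace ℝ (Fin n) → ℝ) :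
    EuclideanSpace ℝ (Fin n) → ℝ :=
  fun x => ∑ i, fderiv ℝ (fun z => fderiv ℝ f z (EuclideanSpace.single i 1)) x
    (EuclideanSpace.single i 1)

/-- The dual kernel `w(x,y) = (|x|² + y²)^(-(n-2σ)/2)`. -/
noncomputable def dualKer (n : ℕ) (σ : ℝ) (x : EuclideanSpace ℝ (Fin n)) (y : ℝ) : ℝ :=
  (‖x‖ ^ 2 + y ^ 2) ^ (-((n : ℝ) - 2 * σ) / 2)

/-! With `r = ‖x‖² + y²` and `w = r ^ a`, both the Laplacian in `x` and `∂²_y + (1 - 2σ)/y ∂_y`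
are computed from the chain rule for `r ^ a`. Using `‖x‖² + y² = r`, the equation collapses to
`2a (2a + n - 2σ) r^(a-1) = 0`, which holds exactly for the exponent `a = -(n - 2σ)/2`. -/

section Radial

variable {E : Type*} [NormedAddCommGroup E] [InnerProductSpace ℝ E] {c : ℝ}

theorem hasFDerivAt_rpow_normSq_add (hc : 0 < c) (a : ℝ) (z : E) :
    HasFDerivAt (fun z : E => (‖z‖ ^ 2 + c) ^ a)
      ((2 * a * (‖z‖ ^ 2 + c) ^ (a - 1)) • innerSL ℝ z) z := by
  have hnormSq : HasFDerivAt (fun z : E => ‖z‖ ^ 2 + c) ((2 : ℝ) • innerSL ℝ z) z :=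
    ((hasFDerivAt_id z).norm_sq.add_const c).congr_fderiv (by ext v; simp [two_smul])
  convert hnormSq.rpow_const (p := a) (Or.inl (by positivity : (0 : ℝ) < ‖z‖ ^ 2 + c).ne') using 1
  rw [smul_smul]
  ring_nf

theorem fderiv_rpow_normSq_add_single {n : ℕ} (hc : 0 < c) (a : ℝ)
    (z : EuclideanSpace ℝ (Fin n)) (i : Fin n) :
    fderiv ℝ (fun z : EuclideanSpace ℝ (Fin n) => (‖z‖ ^ 2 + c) ^ a) z
        (EuclideanSpace.single i 1) = 2 * a * (‖z‖ ^ 2 + c) ^ (a - 1) * z i := by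
  simp [(hasFDerivAt_rpow_normSq_add hc a z).fderiv, EuclideanSpace.inner_single_right]

theorem lap_rpow_normSq_add {n : ℕ} (hc : 0 < c) (a : ℝ) (x : EuclideanSpace ℝ (Fin n)) :
    lap (fun z : EuclideanSpace ℝ (Fin n) => (‖z‖ ^ 2 + c) ^ a) x
      = 4 * a * (a - 1) * (‖x‖ ^ 2 + c) ^ (a - 2) * ‖x‖ ^ 2
        + 2 * n * a * (‖x‖ ^ 2 + c) ^ (a - 1) := by
  have hpartial (i : Fin n) :
      fderiv ℝ (fun z => fderiv ℝ (fun z : EuclideanSpace ℝ (Fin n) => (‖z‖ ^ 2 + c) ^ a) z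
          (EuclideanSpace.single i 1)) x (EuclideanSpace.single i 1)
        = 4 * a * (a - 1) * (‖x‖ ^ 2 + c) ^ (a - 2) * x i ^ 2
          + 2 * a * (‖x‖ ^ 2 + c) ^ (a - 1) := by
    simp_rw [fderiv_rpow_normSq_add_single hc a]
    have hprod : HasFDerivAt
        (fun z : EuclideanSpace ℝ (Fin n) => 2 * a * (‖z‖ ^ 2 + c) ^ (a - 1) * z i) _ x :=
      ((hasFDerivAt_rpow_normSq_add hc (a - 1) x).const_mul (2 * a)).mul
        (EuclideanSpace.proj i : EuclideanSpace ℝ (Fin n) →L[ℝ] ℝ).hasFDerivAt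
    rw [hprod.fderiv]
    simp only [add_apply, smul_apply, PiLp.proj_apply,
      PiLp.single_eq_same, smul_eq_mul, mul_one, coe_innerSL_apply,
      EuclideanSpace.inner_single_right, ringHom_apply, one_mul]
    ring_nf
  have hsum : ∑ i, x i ^ 2 = ‖x‖ ^ 2 := by
    simp [EuclideanSpace.norm_eq, Real.sq_sqrt (Finset.sum_nonneg fun i _ => sq_nonneg _)]
  simp only [lap, hpartial, Finset.sum_add_distrib, ← Finset.mul_sum, hsum, Finset.sum_const,
    Finset.card_univ, Fintype.card_fin, nsmul_eq_mul]
  ring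

end Radial

section Axial

variable {b : ℝ}

theorem hasDerivAt_rpow_add_sq (a : ℝ) {t : ℝ} (h : b + t ^ 2 ≠ 0) :
    HasDerivAt (fun s => (b + s ^ 2) ^ a) (2 * a * (b + t ^ 2) ^ (a - 1) * t) t := by
  have hsq : HasDerivAt (fun s : ℝ => b + s ^ 2) (2 * t) t := by
    simpa using (hasDerivAt_pow 2 t).const_add b
  convert hsq.rpow_const (p := a) (Or.inl h) using 1
  ring

theorem deriv_deriv_rpow_add_sq (a : ℝ) {t : ℝ} (h : 0 < b + t ^ 2) :
    deriv (fun s => deriv (fun s => (b + s ^ 2) ^ a) s) t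
      = 2 * a * (b + t ^ 2) ^ (a - 1) + 4 * a * (a - 1) * (b + t ^ 2) ^ (a - 2) * t ^ 2 := by
  have hnear : ∀ᶠ s in nhds t, 0 < b + s ^ 2 :=
    continuousAt_const.eventually_lt
      (by fun_prop : Continuous fun s : ℝ => b + s ^ 2).continuousAt h
  have hderiv : (fun s => deriv (fun s => (b + s ^ 2) ^ a) s)
      =ᶠ[nhds t] fun s => 2 * a * (b + s ^ 2) ^ (a - 1) * s := by
    filter_upwards [hnear] with s hs using (hasDerivAt_rpow_add_sq a hs.ne').deriv
  have hprod : HasDerivAt (fun s => 2 * a * (b + s ^ 2) ^ (a - 1) * s) _ t :=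
    ((hasDerivAt_rpow_add_sq (a - 1) h.ne').const_mul (2 * a)).mul (hasDerivAt_id t)
  rw [hderiv.deriv_eq, hprod.deriv]
  ring_nf

end Axial

theorem stmt_11_general (n : ℕ) (σ : ℝ) :
    ∀ (x : EuclideanSpace ℝ (Fin n)) (y : ℝ), 0 < y →
      lap (fun x' => dualKer n σ x' y) x
        + deriv (fun t => deriv (fun s => dualKer n σ x s) t) y
        + ((1 - 2 * σ) / y) * deriv (fun s => dualKer n σ x s) y = 0 := by
  intro x y hy
  set a : ℝ := -((n : ℝ) - 2 * σ) / 2 with ha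
  set r : ℝ := ‖x‖ ^ 2 + y ^ 2 with hr
  have hr0 : 0 < r := by positivity
  have hlap : lap (fun x' => dualKer n σ x' y) x
      = 4 * a * (a - 1) * r ^ (a - 2) * ‖x‖ ^ 2 + 2 * n * a * r ^ (a - 1) :=
    lap_rpow_normSq_add (by positivity) a x
  have hdy : deriv (fun s => dualKer n σ x s) y = 2 * a * r ^ (a - 1) * y :=
    (hasDerivAt_rpow_add_sq a hr0.ne').deriv
  have hdyy : deriv (fun t => deriv (fun s => dualKer n σ x s) t) y
      = 2 * a * r ^ (a - 1) + 4 * a * (a - 1) * r ^ (a - 2) * y ^ 2 :=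
    deriv_deriv_rpow_add_sq a hr0
  have hpow : r ^ (a - 1) = r ^ (a - 2) * r := by
    rw [← rpow_add_one hr0.ne']
    ring_nf
  rw [hlap, hdy, hdyy, hpow, hr, ha]
  field_simp
  ring

theorem stmt_11 (n : ℕ) (hn : 1 ≤ n) (σ : ℝ) (hσ : σ ∈ Set.Ioo (0:ℝ) 1)
    (hnσ : 2 * σ < n) :
    ∀ (x : EuclideanSpace ℝ (Fin n)) (y : ℝ), 0 < y →
      lap (fun x' => dualKer n σ x' y) x
        + deriv (fun t => deriv (fun s => dualKer n σ x s) t) y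
        + ((1 - 2 * σ) / y) * deriv (fun s => dualKer n σ x s) y = 0 :=
  stmt_11_general n σ
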